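/- arXiv:0810.2688 — 5 statements merged into one kernel-verified Lean document; each statement's English description precedes it below -/
import Mathlib

section
/- Let T ∈ (0,∞], let b : [0,T) → ℝ and σ : [0,T) → (0,∞) be continuous, let α ∈ ℝ, and suppose lim_{t↑T} (b(t)/σ(t)²)·exp{2α∫₀ᵗ b(w) dw} = C for some C ∈ ℝ with C ≠ 0. Then lim_{t↑T} I_α(t) = ∞ if and only if lim_{t↑T} ∫₀ᵗ |b(v)| dv = ∞. -/
open MeasureTheory Filter Set Topology intervalIntegral

/-- The filter of real numbers `t` approaching `T ∈ (0,∞]` from below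
(`atTop` when `T = ⊤`, `𝓝[<] T` when `T` is finite). -/
noncomputable def upFilter (T : EReal) : Filter ℝ :=
  Filter.comap (fun x : ℝ => (x : EReal)) (𝓝[<] T)

/-- The Fisher information
`I_α(t) = ∫₀ᵗ (b(s)²/σ(s)²) · (∫₀ˢ σ(u)² · exp{2α ∫ᵤˢ b(v) dv} du) ds`. -/
noncomputable def fisherInfo (b σ : ℝ → ℝ) (α : ℝ) (t : ℝ) : ℝ :=
  ∫ s in (0:ℝ)..t, (b s) ^ 2 / (σ s) ^ 2 *
    ∫ u in (0:ℝ)..s, (σ u) ^ 2 * Real.exp (2 * α * ∫ v in u..s, b v)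

/-!
With `g = b e^{2α∫₀ᵗ b} / σ²` (`driftRatio`), which tends to `C ≠ 0`, and
`J(s) = ∫₀ˢ σ(u)² e^{-2α∫₀ᵘ b} du` (`normVariance`), the inner integral of `I_α` factors as
`e^{2α∫₀ˢ b} J(s)`; hence `I_α' = |b| |g| J` and `J' = |b| / |g|`. Once `|C|/2 ≤ |g| ≤ 2|C|` on
`[t₀, T)`, this gives `I_α(t) ≥ (|C|/2) J(t₀) ∫_{t₀}^t |b|` and
`J(t) ≤ J(t₀) + (2/|C|) ∫_{t₀}^t |b|`, so that `I_α(t) = O((1 + ∫₀ᵗ |b|)²)`.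
-/

noncomputable def driftFactor (b : ℝ → ℝ) (α u : ℝ) : ℝ :=
  Real.exp (2 * α * ∫ v in (0:ℝ)..u, b v)

noncomputable def driftRatio (b σ : ℝ → ℝ) (α t : ℝ) : ℝ :=
  b t / σ t ^ 2 * driftFactor b α t

noncomputable def normVariance (b σ : ℝ → ℝ) (α s : ℝ) : ℝ :=
  ∫ u in (0:ℝ)..s, σ u ^ 2 / driftFactor b α u

structure AdmissibleUpTo (b σ : ℝ → ℝ) (t : ℝ) : Prop where
  continuousOn_b : ContinuousOn b (Icc 0 t)
  continuousOn_σ : ContinuousOn σ (Icc 0 t)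
  σ_ne_zero : ∀ s ∈ Icc 0 t, σ s ≠ 0

section
variable {b σ : ℝ → ℝ} {α c c' s t t₀ : ℝ}

lemma driftFactor_pos : 0 < driftFactor b α s := Real.exp_pos _

lemma mul_driftRatio_eq_abs_mul_abs :
    b s * driftRatio b σ α s = |b s| * |driftRatio b σ α s| := by
  have h : 0 ≤ b s * driftRatio b σ α s := by
    have := (driftFactor_pos (b := b) (α := α) (s := s)).le
    rw [driftRatio, ← mul_assoc, ← mul_div_assoc, ← sq]
    positivity
  rw [← abs_mul, abs_of_nonneg h]

lemma sq_div_driftFactor_mul_abs_driftRatio (hσ : σ s ≠ 0) :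
    σ s ^ 2 / driftFactor b α s * |driftRatio b σ α s| = |b s| := by
  have hE := (driftFactor_pos (b := b) (α := α) (s := s)).ne'
  rw [driftRatio, abs_mul, abs_div, abs_of_pos driftFactor_pos, abs_of_nonneg (sq_nonneg (σ s))]
  field_simp

lemma integral_sq_mul_exp_eq_driftFactor_mul (hb : IntervalIntegrable b volume 0 s) :
    ∫ u in (0:ℝ)..s, σ u ^ 2 * Real.exp (2 * α * ∫ v in u..s, b v) =
      driftFactor b α s * normVariance b σ α s := by
  rw [normVariance, ← intervalIntegral.integral_const_mul]
  refine integral_congr fun u hu => ?_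
  have hbu : IntervalIntegrable b volume 0 u := hb.mono_set (uIcc_subset_uIcc_left hu)
  rw [← integral_interval_sub_left hb hbu, mul_sub, Real.exp_sub, driftFactor, driftFactor]
  ring

lemma fisherInfo_eq_integral (hb : IntervalIntegrable b volume 0 t) :
    fisherInfo b σ α t =
      ∫ s in (0:ℝ)..t, b s * driftRatio b σ α s * normVariance b σ α s := by
  refine integral_congr fun s hs => ?_
  rw [integral_sq_mul_exp_eq_driftFactor_mul (hb.mono_set (uIcc_subset_uIcc_left hs)),
    driftRatio]
  ring

lemma fisherInfo_nonneg (ht : 0 ≤ t) : 0 ≤ fisherInfo b σ α t :=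
  integral_nonneg ht fun _ hs =>
    mul_nonneg (by positivity) (integral_nonneg hs.1 fun _ _ => by positivity)

lemma normVariance_nonneg (hs : 0 ≤ s) : 0 ≤ normVariance b σ α s :=
  integral_nonneg hs fun _ _ => div_nonneg (sq_nonneg _) driftFactor_pos.le

lemma ContinuousOn.intervalIntegrable_of_mem_Icc {E : Type*} [NormedAddCommGroup E]
    {f : ℝ → E} {a : ℝ} (hf : ContinuousOn f (Icc a t)) (ht₀ : t₀ ∈ Icc a t) :
    IntervalIntegrable f volume t₀ t :=
  (hf.mono (Icc_subset_Icc ht₀.1 le_rfl)).intervalIntegrable_of_Icc ht₀.2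

lemma integral_sub_integral_of_continuousOn {f : ℝ → ℝ} {a : ℝ} (hf : ContinuousOn f (Icc a t))
    (ht₀ : t₀ ∈ Icc a t) : (∫ x in a..t, f x) - ∫ x in a..t₀, f x = ∫ x in t₀..t, f x :=
  integral_interval_sub_left (hf.intervalIntegrable_of_Icc (ht₀.1.trans ht₀.2))
    ((hf.mono (Icc_subset_Icc le_rfl ht₀.2)).intervalIntegrable_of_Icc ht₀.1)

lemma continuousOn_driftFactor (hb : ContinuousOn b (Icc 0 t)) (ht : 0 ≤ t) :
    ContinuousOn (driftFactor b α) (Icc 0 t) := by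
  have hprim := continuousOn_primitive_interval (μ := volume) (a := 0) (b := t)
    (by rw [uIcc_of_le ht]; exact hb.integrableOn_Icc)
  rw [uIcc_of_le ht] at hprim
  exact Real.continuous_exp.comp_continuousOn (continuousOn_const.mul hprim)

lemma continuousOn_sq_div_driftFactor (hb : ContinuousOn b (Icc 0 t))
    (hσ : ContinuousOn σ (Icc 0 t)) (ht : 0 ≤ t) :
    ContinuousOn (fun u => σ u ^ 2 / driftFactor b α u) (Icc 0 t) :=
  (hσ.pow 2).div (continuousOn_driftFactor hb ht) fun _ _ => driftFactor_pos.ne'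

lemma continuousOn_normVariance (hb : ContinuousOn b (Icc 0 t))
    (hσ : ContinuousOn σ (Icc 0 t)) (ht : 0 ≤ t) :
    ContinuousOn (normVariance b σ α) (Icc 0 t) := by
  have hprim := continuousOn_primitive_interval (μ := volume) (a := 0) (b := t)
    (f := fun u => σ u ^ 2 / driftFactor b α u)
    (by rw [uIcc_of_le ht]; exact (continuousOn_sq_div_driftFactor hb hσ ht).integrableOn_Icc)
  rwa [uIcc_of_le ht] at hprim

lemma normVariance_mono (hb : ContinuousOn b (Icc 0 t)) (hσ : ContinuousOn σ (Icc 0 t))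
    (hs : 0 ≤ s) (hst : s ≤ t) : normVariance b σ α s ≤ normVariance b σ α t :=
  integral_mono_interval le_rfl hs hst
    (ae_of_all _ fun _ => div_nonneg (sq_nonneg _) driftFactor_pos.le)
    ((continuousOn_sq_div_driftFactor hb hσ (hs.trans hst)).intervalIntegrable_of_Icc
      (hs.trans hst))

namespace AdmissibleUpTo

lemma continuousOn_driftRatio (h : AdmissibleUpTo b σ t) (ht : 0 ≤ t) :
    ContinuousOn (driftRatio b σ α) (Icc 0 t) :=
  (h.continuousOn_b.div (h.continuousOn_σ.pow 2) fun s hs => pow_ne_zero 2 (h.σ_ne_zero s hs)).mul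
    (continuousOn_driftFactor h.continuousOn_b ht)

lemma continuousOn_mul_driftRatio_mul_normVariance (h : AdmissibleUpTo b σ t) (ht : 0 ≤ t) :
    ContinuousOn (fun s => b s * driftRatio b σ α s * normVariance b σ α s) (Icc 0 t) :=
  (h.continuousOn_b.mul (h.continuousOn_driftRatio ht)).mul
    (continuousOn_normVariance h.continuousOn_b h.continuousOn_σ ht)

lemma normVariance_pos (h : AdmissibleUpTo b σ t) (ht : 0 < t) : 0 < normVariance b σ α t := by
  refine intervalIntegral_pos_of_pos_on ?_ (fun u hu => ?_) ht
  · exact (continuousOn_sq_div_driftFactor h.continuousOn_b h.continuousOn_σ ht.le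
      ).intervalIntegrable_of_Icc ht.le
  · exact div_pos (sq_pos_of_ne_zero (h.σ_ne_zero u (Ioo_subset_Icc_self hu))) driftFactor_pos

lemma fisherInfo_sub_fisherInfo (h : AdmissibleUpTo b σ t) (ht₀ : t₀ ∈ Icc 0 t) :
    fisherInfo b σ α t - fisherInfo b σ α t₀ =
      ∫ s in t₀..t, b s * driftRatio b σ α s * normVariance b σ α s := by
  have hb := h.continuousOn_b
  rw [fisherInfo_eq_integral (hb.intervalIntegrable_of_Icc (ht₀.1.trans ht₀.2)),
    fisherInfo_eq_integral
      ((hb.mono (Icc_subset_Icc le_rfl ht₀.2)).intervalIntegrable_of_Icc ht₀.1)]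
  exact integral_sub_integral_of_continuousOn
    (h.continuousOn_mul_driftRatio_mul_normVariance (ht₀.1.trans ht₀.2)) ht₀

lemma mul_sub_le_fisherInfo (h : AdmissibleUpTo b σ t) (ht₀ : t₀ ∈ Icc 0 t)
    (hc : ∀ s ∈ Icc t₀ t, c ≤ |driftRatio b σ α s|) :
    c * normVariance b σ α t₀ * ((∫ v in (0:ℝ)..t, |b v|) - ∫ v in (0:ℝ)..t₀, |b v|) ≤
      fisherInfo b σ α t := by
  have hb := h.continuousOn_b
  have hJ₀ : 0 ≤ normVariance b σ α t₀ := normVariance_nonneg ht₀.1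
  have hmono : ∫ s in t₀..t, c * normVariance b σ α t₀ * |b s| ≤
      ∫ s in t₀..t, b s * driftRatio b σ α s * normVariance b σ α s := by
    refine integral_mono_on ht₀.2 ?_ ?_ fun s hs => ?_
    · exact (hb.abs.intervalIntegrable_of_mem_Icc ht₀).const_mul _
    · exact (h.continuousOn_mul_driftRatio_mul_normVariance (ht₀.1.trans ht₀.2)
        ).intervalIntegrable_of_mem_Icc ht₀
    · have hJ := normVariance_mono (α := α) (hb.mono (Icc_subset_Icc le_rfl hs.2))
        (h.continuousOn_σ.mono (Icc_subset_Icc le_rfl hs.2)) ht₀.1 hs.1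
      calc c * normVariance b σ α t₀ * |b s|
          ≤ |driftRatio b σ α s| * normVariance b σ α t₀ * |b s| := by gcongr; exact hc s hs
        _ ≤ |driftRatio b σ α s| * normVariance b σ α s * |b s| := by gcongr
        _ = b s * driftRatio b σ α s * normVariance b σ α s := by
          rw [mul_driftRatio_eq_abs_mul_abs]; ring
  rw [integral_sub_integral_of_continuousOn hb.abs ht₀, ← intervalIntegral.integral_const_mul]
  linarith [fisherInfo_nonneg (b := b) (σ := σ) (α := α) ht₀.1,
    h.fisherInfo_sub_fisherInfo (α := α) ht₀]

lemma fisherInfo_le_add_mul (h : AdmissibleUpTo b σ t) (ht₀ : t₀ ∈ Icc 0 t)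
    (hc' : ∀ s ∈ Icc t₀ t, |driftRatio b σ α s| ≤ c') :
    fisherInfo b σ α t ≤ fisherInfo b σ α t₀ +
      c' * normVariance b σ α t * ((∫ v in (0:ℝ)..t, |b v|) - ∫ v in (0:ℝ)..t₀, |b v|) := by
  have hb := h.continuousOn_b
  have hmono : ∫ s in t₀..t, b s * driftRatio b σ α s * normVariance b σ α s ≤
      ∫ s in t₀..t, c' * normVariance b σ α t * |b s| := by
    refine integral_mono_on ht₀.2 ?_ ?_ fun s hs => ?_
    · exact (h.continuousOn_mul_driftRatio_mul_normVariance (ht₀.1.trans ht₀.2)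
        ).intervalIntegrable_of_mem_Icc ht₀
    · exact (hb.abs.intervalIntegrable_of_mem_Icc ht₀).const_mul _
    · have hJ₀ : 0 ≤ normVariance b σ α s := normVariance_nonneg (ht₀.1.trans hs.1)
      have hJ := normVariance_mono (α := α) hb h.continuousOn_σ (ht₀.1.trans hs.1) hs.2
      have hc'₀ : 0 ≤ c' := (abs_nonneg _).trans (hc' s hs)
      calc b s * driftRatio b σ α s * normVariance b σ α s
            = |driftRatio b σ α s| * normVariance b σ α s * |b s| := by
              rw [mul_driftRatio_eq_abs_mul_abs]; ring
        _ ≤ c' * normVariance b σ α s * |b s| := by gcongr; exact hc' s hs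
        _ ≤ c' * normVariance b σ α t * |b s| := by gcongr
  rw [integral_sub_integral_of_continuousOn hb.abs ht₀, ← intervalIntegral.integral_const_mul]
  linarith [h.fisherInfo_sub_fisherInfo (α := α) ht₀]

lemma normVariance_le_add_div (h : AdmissibleUpTo b σ t) (ht₀ : t₀ ∈ Icc 0 t) (hc : 0 < c)
    (hcg : ∀ s ∈ Icc t₀ t, c ≤ |driftRatio b σ α s|) :
    normVariance b σ α t ≤ normVariance b σ α t₀ +
      ((∫ v in (0:ℝ)..t, |b v|) - ∫ v in (0:ℝ)..t₀, |b v|) / c := by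
  have hb := h.continuousOn_b
  have hσE := continuousOn_sq_div_driftFactor (α := α) hb h.continuousOn_σ (ht₀.1.trans ht₀.2)
  have hmono : ∫ u in t₀..t, σ u ^ 2 / driftFactor b α u ≤ ∫ u in t₀..t, |b u| / c := by
    refine integral_mono_on ht₀.2 ?_ ?_ fun u hu => ?_
    · exact hσE.intervalIntegrable_of_mem_Icc ht₀
    · exact (hb.abs.intervalIntegrable_of_mem_Icc ht₀).div_const _
    · rw [le_div_iff₀ hc,
        ← sq_div_driftFactor_mul_abs_driftRatio (h.σ_ne_zero u ⟨ht₀.1.trans hu.1, hu.2⟩)]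
      exact mul_le_mul_of_nonneg_left (hcg u hu) (div_nonneg (sq_nonneg _) driftFactor_pos.le)
  rw [integral_sub_integral_of_continuousOn hb.abs ht₀, ← intervalIntegral.integral_div]
  unfold normVariance
  linarith [integral_sub_integral_of_continuousOn hσE ht₀]

lemma fisherInfo_le_mul_one_add_sq (h : AdmissibleUpTo b σ t) (ht₀ : t₀ ∈ Icc 0 t) (hc : 0 < c)
    (hg : ∀ s ∈ Icc t₀ t, |driftRatio b σ α s| ∈ Icc c c') :
    fisherInfo b σ α t ≤ (fisherInfo b σ α t₀ + c' * normVariance b σ α t₀ + c' / c) *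
      (1 + ∫ v in (0:ℝ)..t, |b v|) ^ 2 := by
  set A := ∫ v in (0:ℝ)..t, |b v|
  set Δ := A - ∫ v in (0:ℝ)..t₀, |b v|
  have hΔ : 0 ≤ Δ := (integral_nonneg ht₀.2 fun _ _ => abs_nonneg _).trans_eq
    (integral_sub_integral_of_continuousOn h.continuousOn_b.abs ht₀).symm
  have hΔA : Δ ≤ A := sub_le_self _ (integral_nonneg ht₀.1 fun _ _ => abs_nonneg _)
  have hc' : 0 ≤ c' := hc.le.trans ((hg t ⟨ht₀.2, le_rfl⟩).1.trans (hg t ⟨ht₀.2, le_rfl⟩).2)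
  have hI₀ : 0 ≤ fisherInfo b σ α t₀ := fisherInfo_nonneg ht₀.1
  have hJ₀ : 0 ≤ normVariance b σ α t₀ := normVariance_nonneg ht₀.1
  calc fisherInfo b σ α t ≤ fisherInfo b σ α t₀ + c' * normVariance b σ α t * Δ :=
        h.fisherInfo_le_add_mul ht₀ fun s hs => (hg s hs).2
    _ ≤ fisherInfo b σ α t₀ + c' * (normVariance b σ α t₀ + Δ / c) * Δ := by
        gcongr
        exact h.normVariance_le_add_div ht₀ hc fun s hs => (hg s hs).1
    _ = fisherInfo b σ α t₀ * 1 + c' * normVariance b σ α t₀ * Δ + c' / c * Δ ^ 2 := by ring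
    _ ≤ fisherInfo b σ α t₀ * (1 + A) ^ 2 + c' * normVariance b σ α t₀ * (1 + A) ^ 2 +
          c' / c * (1 + A) ^ 2 := by
        gcongr <;> nlinarith
    _ = _ := by ring

end AdmissibleUpTo

lemma tendsto_atTop_of_le_mul_sq {ι : Type*} {l : Filter ι} {f g : ι → ℝ} {K : ℝ}
    (hf : Tendsto f l atTop) (hfg : ∀ᶠ x in l, f x ≤ K * g x ^ 2) (hg : ∀ᶠ x in l, 0 ≤ g x) :
    Tendsto g l atTop := by
  have hK : 0 < max K 1 := lt_max_of_lt_right one_pos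
  refine tendsto_atTop_mono' l ((hfg.and hg).mono fun x h => ?_)
    (Real.tendsto_sqrt_atTop.comp (hf.atTop_div_const hK))
  refine (Real.sqrt_le_left h.2).2 ((div_le_iff₀' hK).2 (h.1.trans ?_))
  exact mul_le_mul_of_nonneg_right (le_max_left K 1) (sq_nonneg _)

lemma tendsto_integral_abs_atTop_of_tendsto_fisherInfo {l : Filter ℝ} (ht₀ : 0 ≤ t₀)
    (hc : 0 < c) (hl : ∀ᶠ t in l, t₀ ≤ t ∧ AdmissibleUpTo b σ t ∧
      ∀ s ∈ Icc t₀ t, |driftRatio b σ α s| ∈ Icc c c')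
    (hI : Tendsto (fisherInfo b σ α) l atTop) :
    Tendsto (fun t => ∫ v in (0:ℝ)..t, |b v|) l atTop := by
  have h := tendsto_atTop_of_le_mul_sq hI
    (hl.mono fun t ⟨htt, ht, hg⟩ => ht.fisherInfo_le_mul_one_add_sq ⟨ht₀, htt⟩ hc hg)
    (hl.mono fun t ⟨htt, _⟩ =>
      add_nonneg zero_le_one (integral_nonneg (ht₀.trans htt) fun _ _ => abs_nonneg _))
  simpa using tendsto_atTop_add_const_left _ (-1) h

lemma tendsto_fisherInfo_atTop_of_tendsto_integral_abs {l : Filter ℝ} (ht₀ : 0 < t₀)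
    (h₀ : AdmissibleUpTo b σ t₀) (hc : 0 < c)
    (hl : ∀ᶠ t in l, t₀ ≤ t ∧ AdmissibleUpTo b σ t ∧ ∀ s ∈ Icc t₀ t, c ≤ |driftRatio b σ α s|)
    (hA : Tendsto (fun t => ∫ v in (0:ℝ)..t, |b v|) l atTop) :
    Tendsto (fisherInfo b σ α) l atTop := by
  have hpos : 0 < c * normVariance b σ α t₀ := mul_pos hc (h₀.normVariance_pos ht₀)
  refine tendsto_atTop_mono' l
    (hl.mono fun _ ⟨htt, ht, hg⟩ => ht.mul_sub_le_fisherInfo ⟨ht₀.le, htt⟩ hg) ?_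
  simpa [sub_eq_add_neg] using (tendsto_atTop_add_const_right _ _ hA).const_mul_atTop hpos

end

lemma eventually_upFilter {T : EReal} {t₀ : ℝ} (h : (t₀ : EReal) < T) :
    ∀ᶠ t in upFilter T, t₀ ≤ t ∧ (t : EReal) < T :=
  mem_of_superset (preimage_mem_comap (Ioo_mem_nhdsLT h))
    fun _ ht => ⟨EReal.coe_le_coe_iff.1 ht.1.le, ht.2⟩

lemma exists_forall_of_eventually_upFilter {T : EReal} (hT : 0 < T) {P : ℝ → Prop}
    (h : ∀ᶠ t in upFilter T, P t) :
    ∃ t₀ : ℝ, 0 < t₀ ∧ (t₀ : EReal) < T ∧ ∀ t : ℝ, t₀ ≤ t → (t : EReal) < T → P t := by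
  obtain ⟨U, hU, hUP⟩ := mem_comap.1 h
  obtain ⟨a, haT, haU⟩ := (mem_nhdsLT_iff_exists_Ioo_subset' hT).1 hU
  obtain ⟨t₀, ht₀, ht₀T⟩ := EReal.lt_iff_exists_real_btwn.1 (max_lt haT hT)
  refine ⟨t₀, EReal.coe_pos.1 ((le_max_right a 0).trans_lt ht₀), ht₀T,
    fun t ht htT => hUP (haU ⟨?_, htT⟩)⟩
  exact (le_max_left a 0).trans_lt (ht₀.trans_le (EReal.coe_le_coe_iff.2 ht))

/-- Under condition (2.6), the Fisher information tends to infinity as `t ↑ T`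
iff `∫₀ᵗ |b(v)| dv` tends to infinity. -/
theorem fisher_atTop_iff_intAbs_atTop (T : EReal) (hT : 0 < T)
    (b σ : ℝ → ℝ) (α : ℝ) (C : ℝ) (hC : C ≠ 0)
    (hb : ContinuousOn b {t : ℝ | 0 ≤ t ∧ (t : EReal) < T})
    (hσ : ContinuousOn σ {t : ℝ | 0 ≤ t ∧ (t : EReal) < T})
    (hσpos : ∀ t : ℝ, 0 ≤ t → (t : EReal) < T → 0 < σ t)
    (hlim : Tendsto
      (fun t : ℝ => b t / (σ t) ^ 2 * Real.exp (2 * α * ∫ w in (0:ℝ)..t, b w))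
      (upFilter T) (𝓝 C)) :
    Tendsto (fisherInfo b σ α) (upFilter T) atTop ↔
      Tendsto (fun t : ℝ => ∫ v in (0:ℝ)..t, |b v|) (upFilter T) atTop := by
  have hadm : ∀ t : ℝ, (t : EReal) < T → AdmissibleUpTo b σ t := fun t htT =>
    have hsub : Icc 0 t ⊆ {t : ℝ | 0 ≤ t ∧ (t : EReal) < T} :=
      fun s hs => ⟨hs.1, (EReal.coe_le_coe_iff.2 hs.2).trans_lt htT⟩
    ⟨hb.mono hsub, hσ.mono hsub, fun s hs => (hσpos s (hsub hs).1 (hsub hs).2).ne'⟩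
  have hC' : 0 < |C| := abs_pos.2 hC
  have hratio : ∀ᶠ t in upFilter T, |driftRatio b σ α t| ∈ Icc (|C| / 2) (2 * |C|) :=
    (hlim.abs : Tendsto (fun t => |driftRatio b σ α t|) _ _).eventually
      (Icc_mem_nhds (by linarith) (by linarith))
  obtain ⟨t₀, ht₀, ht₀T, hgood⟩ := exists_forall_of_eventually_upFilter hT hratio
  have hbounds : ∀ᶠ t in upFilter T, t₀ ≤ t ∧ AdmissibleUpTo b σ t ∧
      ∀ s ∈ Icc t₀ t, |driftRatio b σ α s| ∈ Icc (|C| / 2) (2 * |C|) :=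
    (eventually_upFilter ht₀T).mono fun t ⟨htt, htT⟩ => ⟨htt, hadm t htT,
      fun s hs => hgood s hs.1 ((EReal.coe_le_coe_iff.2 hs.2).trans_lt htT)⟩
  exact ⟨tendsto_integral_abs_atTop_of_tendsto_fisherInfo ht₀.le (by positivity) hbounds,
    tendsto_fisherInfo_atTop_of_tendsto_integral_abs ht₀ (hadm t₀ ht₀T) (by positivity)
      (hbounds.mono fun _ ⟨htt, ht, hg⟩ => ⟨htt, ht, fun s hs => (hg s hs).1⟩)⟩
end

section
/- Let T ∈ (0,∞], let b : [0,T) → ℝ and σ : [0,T) → (0,∞) be continuous, let α ∈ ℝ, and suppose there exist constants c₁ > 0, c₂ > 0 and t₁ ∈ (0,T) such that c₁·|b(t)|·exp{2α∫₀ᵗ b(w) dw} ≤ σ(t)² ≤ c₂·|b(t)|·exp{2α∫₀ᵗ b(w) dw} for all t ∈ [t₁,T). Then for all t ∈ [t₁,T), I_α(t) − I_α(t₁) ≤ a₁·∫_{t₁}^t |b(u)| du + a₂·(∫_{t₁}^t |b(u)| du)², where a₁ := (1/c₁)·∫₀^{t₁} σ(u)²·exp{−2α∫₀ᵘ b(v)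 dv} du and a₂ := c₂/(2c₁). -/
open MeasureTheory Filter Set Topology intervalIntegral

theorem integral_primitive_mul_eq_sq_div_two {f : ℝ → ℝ} {a b : ℝ}
    (hf : ContinuousOn f (uIcc a b)) :
    ∫ x in a..b, (∫ u in a..x, f u) * f x = (∫ u in a..b, f u) ^ 2 / 2 := by
  have hderiv : ∀ x ∈ Ioo (min a b) (max a b),
      HasDerivWithinAt (fun x => ∫ u in a..x, f u) (f x) (Ioi x) x := fun x hx => by
    have hfx : ContinuousAt f x := hf.continuousAt (Icc_mem_nhds hx.1 hx.2)
    have hint : IntervalIntegrable f volume a x :=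
      (hf.mono (uIcc_subset_uIcc left_mem_uIcc (Ioo_subset_Icc_self hx))).intervalIntegrable
    have hmeas : StronglyMeasurableAtFilter f (𝓝 x) :=
      (hf.mono Ioo_subset_Icc_self).stronglyMeasurableAtFilter isOpen_Ioo x hx
    exact (integral_hasDerivAt_right hint hmeas hfx).hasDerivWithinAt
  simpa [integral_id] using integral_comp_mul_deriv'' (g := id)
    (continuousOn_primitive_interval (hf.integrableOn_compact isCompact_uIcc)) hderiv hf
    continuousOn_id

theorem continuousOn_primitive_of_continuousOn_Icc {f : ℝ → ℝ} {a b : ℝ} (hab : a ≤ b)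
    (hf : ContinuousOn f (Icc a b)) :
    ContinuousOn (fun x => ∫ u in a..x, f u) (Icc a b) := by
  simpa only [uIcc_of_le hab] using
    continuousOn_primitive_interval' (hf.intervalIntegrable_of_Icc hab) left_mem_uIcc

theorem ContinuousOn.intervalIntegrable_of_mem_Icc_s4 {f : ℝ → ℝ} {a b x y : ℝ}
    (hf : ContinuousOn f (Icc a b)) (hx : x ∈ Icc a b) (hy : y ∈ Icc a b) :
    IntervalIntegrable f volume x y :=
  (hf.mono (uIcc_subset_Icc hx hy)).intervalIntegrable

theorem sq_div_mul_le_abs_div {x y c E : ℝ} (hc : 0 < c) (hE : 0 < E) (h : c * |x| * E ≤ y) :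
    x ^ 2 / y * E ≤ |x| / c := by
  rcases eq_or_ne x 0 with rfl | hx
  · simp
  have hcxE : 0 < c * |x| * E := by positivity
  calc x ^ 2 / y * E ≤ x ^ 2 / (c * |x| * E) * E := by gcongr
    _ = |x| / c := by
      rw [← sq_abs]
      field_simp

noncomputable def fisherWeight (b σ : ℝ → ℝ) (α u : ℝ) : ℝ :=
  σ u ^ 2 * Real.exp (-(2 * α) * ∫ v in (0:ℝ)..u, b v)

section FisherWeight

variable {b σ : ℝ → ℝ} {α : ℝ}

theorem continuousOn_fisherWeight {t : ℝ} (ht : 0 ≤ t) (hb : ContinuousOn b (Icc 0 t))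
    (hσ : ContinuousOn σ (Icc 0 t)) : ContinuousOn (fisherWeight b σ α) (Icc 0 t) :=
  (hσ.pow 2).mul (Real.continuous_exp.comp_continuousOn
    (continuousOn_const.mul (continuousOn_primitive_of_continuousOn_Icc ht hb)))

theorem integral_sq_mul_exp_integral_eq (σ : ℝ → ℝ) (α : ℝ) {s : ℝ}
    (hb : IntervalIntegrable b volume 0 s) :
    ∫ u in (0:ℝ)..s, σ u ^ 2 * Real.exp (2 * α * ∫ v in u..s, b v) =
      Real.exp (2 * α * ∫ v in (0:ℝ)..s, b v) * ∫ u in (0:ℝ)..s, fisherWeight b σ α u := by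
  rw [← intervalIntegral.integral_const_mul]
  refine integral_congr fun u hu => ?_
  have hbu : IntervalIntegrable b volume 0 u := hb.mono_set (uIcc_subset_uIcc left_mem_uIcc hu)
  rw [fisherWeight, ← integral_interval_sub_left hb hbu, mul_left_comm, ← Real.exp_add]
  ring_nf

theorem fisherWeight_le {c u : ℝ}
    (h : σ u ^ 2 ≤ c * |b u| * Real.exp (2 * α * ∫ v in (0:ℝ)..u, b v)) :
    fisherWeight b σ α u ≤ c * |b u| :=
  calc fisherWeight b σ α u
      ≤ c * |b u| * Real.exp (2 * α * ∫ v in (0:ℝ)..u, b v) *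
          Real.exp (-(2 * α) * ∫ v in (0:ℝ)..u, b v) :=
        mul_le_mul_of_nonneg_right h (Real.exp_pos _).le
    _ = c * |b u| := by
      rw [mul_assoc, ← Real.exp_add, neg_mul, add_neg_cancel, Real.exp_zero, mul_one]

theorem integral_fisherWeight_le {c t₁ s : ℝ} (hs : t₁ ≤ s)
    (hW : IntervalIntegrable (fisherWeight b σ α) volume t₁ s)
    (hb : IntervalIntegrable b volume t₁ s)
    (hupper : ∀ u ∈ Icc t₁ s,
      σ u ^ 2 ≤ c * |b u| * Real.exp (2 * α * ∫ v in (0:ℝ)..u, b v)) :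
    ∫ u in t₁..s, fisherWeight b σ α u ≤ c * ∫ u in t₁..s, |b u| := by
  rw [← intervalIntegral.integral_const_mul]
  exact integral_mono_on hs hW (hb.abs.const_mul c) fun u hu => fisherWeight_le (hupper u hu)

noncomputable def fisherDensity (b σ : ℝ → ℝ) (α s : ℝ) : ℝ :=
  b s ^ 2 / σ s ^ 2 *
    (Real.exp (2 * α * ∫ v in (0:ℝ)..s, b v) * ∫ u in (0:ℝ)..s, fisherWeight b σ α u)

theorem fisherInfo_eq_integral_fisherDensity {τ : ℝ} (hb : IntervalIntegrable b volume 0 τ) :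
    fisherInfo b σ α τ = ∫ s in (0:ℝ)..τ, fisherDensity b σ α s :=
  integral_congr fun s hs => by
    rw [fisherDensity, integral_sq_mul_exp_integral_eq σ α
      (hb.mono_set (uIcc_subset_uIcc left_mem_uIcc hs))]

theorem continuousOn_fisherDensity {t : ℝ} (ht : 0 ≤ t) (hb : ContinuousOn b (Icc 0 t))
    (hσ : ContinuousOn σ (Icc 0 t)) (hσpos : ∀ s ∈ Icc 0 t, 0 < σ s) :
    ContinuousOn (fisherDensity b σ α) (Icc 0 t) :=
  ((hb.pow 2).div (hσ.pow 2) fun s hs => (pow_pos (hσpos s hs) 2).ne').mul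
    ((Real.continuous_exp.comp_continuousOn
      (continuousOn_const.mul (continuousOn_primitive_of_continuousOn_Icc ht hb))).mul
      (continuousOn_primitive_of_continuousOn_Icc ht (continuousOn_fisherWeight ht hb hσ)))

theorem fisherDensity_le {c₁ c₂ t₁ s : ℝ} (hc₁ : 0 < c₁) (ht₁ : 0 ≤ t₁) (hs : t₁ ≤ s)
    (hb : ContinuousOn b (Icc 0 s)) (hσ : ContinuousOn σ (Icc 0 s))
    (hlower : c₁ * |b s| * Real.exp (2 * α * ∫ v in (0:ℝ)..s, b v) ≤ σ s ^ 2)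
    (hupper : ∀ u ∈ Icc t₁ s,
      σ u ^ 2 ≤ c₂ * |b u| * Real.exp (2 * α * ∫ v in (0:ℝ)..u, b v)) :
    fisherDensity b σ α s ≤
      |b s| / c₁ * ((∫ u in (0:ℝ)..t₁, fisherWeight b σ α u) + c₂ * ∫ u in t₁..s, |b u|) := by
  have h0s : 0 ≤ s := ht₁.trans hs
  have hmem₀ : (0 : ℝ) ∈ Icc 0 s := left_mem_Icc.2 h0s
  have hmem₁ : t₁ ∈ Icc 0 s := ⟨ht₁, hs⟩
  have hmem : s ∈ Icc 0 s := right_mem_Icc.2 h0s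
  have hWc := continuousOn_fisherWeight (α := α) h0s hb hσ
  have hsplit : ∫ u in (0:ℝ)..s, fisherWeight b σ α u =
      (∫ u in (0:ℝ)..t₁, fisherWeight b σ α u) + ∫ u in t₁..s, fisherWeight b σ α u :=
    (integral_add_adjacent_intervals (hWc.intervalIntegrable_of_mem_Icc_s4 hmem₀ hmem₁)
      (hWc.intervalIntegrable_of_mem_Icc_s4 hmem₁ hmem)).symm
  have htail : ∫ u in t₁..s, fisherWeight b σ α u ≤ c₂ * ∫ u in t₁..s, |b u| :=
    integral_fisherWeight_le hs (hWc.intervalIntegrable_of_mem_Icc_s4 hmem₁ hmem)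
      (hb.intervalIntegrable_of_mem_Icc_s4 hmem₁ hmem) hupper
  have hW₀ : 0 ≤ ∫ u in (0:ℝ)..s, fisherWeight b σ α u :=
    integral_nonneg h0s fun u _ => mul_nonneg (sq_nonneg _) (Real.exp_pos _).le
  calc fisherDensity b σ α s
      = b s ^ 2 / σ s ^ 2 * Real.exp (2 * α * ∫ v in (0:ℝ)..s, b v) *
          ∫ u in (0:ℝ)..s, fisherWeight b σ α u := (mul_assoc _ _ _).symm
    _ ≤ |b s| / c₁ * ((∫ u in (0:ℝ)..t₁, fisherWeight b σ α u) + c₂ * ∫ u in t₁..s, |b u|) :=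
      mul_le_mul (sq_div_mul_le_abs_div hc₁ (Real.exp_pos _) hlower)
        (hsplit.trans_le (add_le_add le_rfl htail)) hW₀ (by positivity)

theorem fisherInfo_sub_le {c₁ c₂ t₁ t : ℝ} (hc₁ : 0 < c₁) (ht₁ : 0 ≤ t₁) (ht₁t : t₁ ≤ t)
    (hb : ContinuousOn b (Icc 0 t)) (hσ : ContinuousOn σ (Icc 0 t))
    (hσpos : ∀ s ∈ Icc 0 t, 0 < σ s)
    (hlower : ∀ s ∈ Icc t₁ t,
      c₁ * |b s| * Real.exp (2 * α * ∫ v in (0:ℝ)..s, b v) ≤ σ s ^ 2)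
    (hupper : ∀ s ∈ Icc t₁ t,
      σ s ^ 2 ≤ c₂ * |b s| * Real.exp (2 * α * ∫ v in (0:ℝ)..s, b v)) :
    fisherInfo b σ α t - fisherInfo b σ α t₁ ≤
      (1 / c₁ * ∫ u in (0:ℝ)..t₁, fisherWeight b σ α u) * (∫ u in t₁..t, |b u|)
        + c₂ / (2 * c₁) * (∫ u in t₁..t, |b u|) ^ 2 := by
  have h0t : 0 ≤ t := ht₁.trans ht₁t
  have hmem₀ : (0 : ℝ) ∈ Icc 0 t := left_mem_Icc.2 h0t
  have hmem₁ : t₁ ∈ Icc 0 t := ⟨ht₁, ht₁t⟩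
  have hmem : t ∈ Icc 0 t := right_mem_Icc.2 h0t
  have hFc := continuousOn_fisherDensity (α := α) h0t hb hσ hσpos
  set A := ∫ u in (0:ℝ)..t₁, fisherWeight b σ α u
  set B : ℝ → ℝ := fun s => ∫ u in t₁..s, |b u|
  have hbabs : ContinuousOn (fun s => |b s|) (uIcc t₁ t) :=
    (hb.mono (uIcc_subset_Icc hmem₁ hmem)).abs
  have hBc : ContinuousOn B (uIcc t₁ t) :=
    continuousOn_primitive_interval' hbabs.intervalIntegrable left_mem_uIcc
  have hsq : ∫ s in t₁..t, B s * |b s| = B t ^ 2 / 2 :=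
    integral_primitive_mul_eq_sq_div_two hbabs
  rw [fisherInfo_eq_integral_fisherDensity (hb.intervalIntegrable_of_mem_Icc_s4 hmem₀ hmem),
    fisherInfo_eq_integral_fisherDensity (hb.intervalIntegrable_of_mem_Icc_s4 hmem₀ hmem₁),
    integral_interval_sub_left (hFc.intervalIntegrable_of_mem_Icc_s4 hmem₀ hmem)
      (hFc.intervalIntegrable_of_mem_Icc_s4 hmem₀ hmem₁)]
  calc ∫ s in t₁..t, fisherDensity b σ α s
      ≤ ∫ s in t₁..t, (A / c₁ * |b s| + c₂ / c₁ * (B s * |b s|)) := by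
        refine integral_mono_on ht₁t (hFc.intervalIntegrable_of_mem_Icc_s4 hmem₁ hmem)
          ((continuousOn_const.mul hbabs).add
            (continuousOn_const.mul (hBc.mul hbabs))).intervalIntegrable fun s hs => ?_
        calc fisherDensity b σ α s ≤ |b s| / c₁ * (A + c₂ * B s) :=
              fisherDensity_le hc₁ ht₁ hs.1 (hb.mono (Icc_subset_Icc_right hs.2))
                (hσ.mono (Icc_subset_Icc_right hs.2)) (hlower s hs)
                fun u hu => hupper u ⟨hu.1, hu.2.trans hs.2⟩
          _ = A / c₁ * |b s| + c₂ / c₁ * (B s * |b s|) := by ring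
    _ = A / c₁ * B t + c₂ / c₁ * (B t ^ 2 / 2) := by
      rw [integral_add (f := fun s => A / c₁ * |b s|)
          (g := fun s => c₂ / c₁ * (B s * |b s|)) (hbabs.intervalIntegrable.const_mul _)
          ((hBc.mul hbabs).intervalIntegrable.const_mul _),
        intervalIntegral.integral_const_mul, intervalIntegral.integral_const_mul, hsq]
    _ = (1 / c₁ * A) * B t + c₂ / (2 * c₁) * B t ^ 2 := by ring

end FisherWeight

theorem fisher_increment_upper_bound_general (T : EReal)
    (b σ : ℝ → ℝ) (α : ℝ) (c₁ c₂ t₁ : ℝ)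
    (hc₁ : 0 < c₁) (ht₁ : 0 < t₁)
    (hb : ContinuousOn b {t : ℝ | 0 ≤ t ∧ (t : EReal) < T})
    (hσ : ContinuousOn σ {t : ℝ | 0 ≤ t ∧ (t : EReal) < T})
    (hσpos : ∀ t : ℝ, 0 ≤ t → (t : EReal) < T → 0 < σ t)
    (hbound : ∀ t : ℝ, t₁ ≤ t → (t : EReal) < T →
      c₁ * |b t| * Real.exp (2 * α * ∫ w in (0:ℝ)..t, b w) ≤ (σ t) ^ 2 ∧
      (σ t) ^ 2 ≤ c₂ * |b t| * Real.exp (2 * α * ∫ w in (0:ℝ)..t, b w)) :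
    ∀ t : ℝ, t₁ ≤ t → (t : EReal) < T →
      fisherInfo b σ α t - fisherInfo b σ α t₁ ≤
        ((1 / c₁) *
            ∫ u in (0:ℝ)..t₁,
              (σ u) ^ 2 * Real.exp (-(2 * α) * ∫ v in (0:ℝ)..u, b v)) *
          (∫ u in t₁..t, |b u|)
        + (c₂ / (2 * c₁)) * (∫ u in t₁..t, |b u|) ^ 2 := by
  intro t ht₁t htT
  have hdom : Icc 0 t ⊆ {s : ℝ | 0 ≤ s ∧ (s : EReal) < T} := fun s hs =>
    ⟨hs.1, (EReal.coe_le_coe_iff.2 hs.2).trans_lt htT⟩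
  have hbound' (s : ℝ) (hs : s ∈ Icc t₁ t) :=
    hbound s hs.1 (hdom (Icc_subset_Icc_left ht₁.le hs)).2
  exact fisherInfo_sub_le hc₁ ht₁.le ht₁t (hb.mono hdom) (hσ.mono hdom)
    (fun s hs => hσpos s (hdom hs).1 (hdom hs).2) (fun s hs => (hbound' s hs).1)
    fun s hs => (hbound' s hs).2

/-- Upper bound on the increment of the Fisher information under the two-sided bound
`c₁·|b(t)|·exp{2α∫₀ᵗ b} ≤ σ(t)² ≤ c₂·|b(t)|·exp{2α∫₀ᵗ b}` on `[t₁, T)`. -/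
theorem fisher_increment_upper_bound (T : EReal) (hT : 0 < T)
    (b σ : ℝ → ℝ) (α : ℝ) (c₁ c₂ t₁ : ℝ)
    (hc₁ : 0 < c₁) (hc₂ : 0 < c₂) (ht₁ : 0 < t₁) (ht₁T : (t₁ : EReal) < T)
    (hb : ContinuousOn b {t : ℝ | 0 ≤ t ∧ (t : EReal) < T})
    (hσ : ContinuousOn σ {t : ℝ | 0 ≤ t ∧ (t : EReal) < T})
    (hσpos : ∀ t : ℝ, 0 ≤ t → (t : EReal) < T → 0 < σ t)
    (hbound : ∀ t : ℝ, t₁ ≤ t → (t : EReal) < T →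
      c₁ * |b t| * Real.exp (2 * α * ∫ w in (0:ℝ)..t, b w) ≤ (σ t) ^ 2 ∧
      (σ t) ^ 2 ≤ c₂ * |b t| * Real.exp (2 * α * ∫ w in (0:ℝ)..t, b w)) :
    ∀ t : ℝ, t₁ ≤ t → (t : EReal) < T →
      fisherInfo b σ α t - fisherInfo b σ α t₁ ≤
        ((1 / c₁) *
            ∫ u in (0:ℝ)..t₁,
              (σ u) ^ 2 * Real.exp (-(2 * α) * ∫ v in (0:ℝ)..u, b v)) *
          (∫ u in t₁..t, |b u|)
        + (c₂ / (2 * c₁)) * (∫ u in t₁..t, |b u|) ^ 2 :=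
  fisher_increment_upper_bound_general T b σ α c₁ c₂ t₁ hc₁ ht₁ hb hσ hσpos hbound
end

section
/- Let T ∈ (0,∞], let b : [0,T) → ℝ and σ : [0,T) → (0,∞) be continuous, let α ∈ ℝ, and suppose there exist constants c₁ > 0, c₂ > 0 and t₁ ∈ (0,T) such that c₁·|b(t)|·exp{2α∫₀ᵗ b(w) dw} ≤ σ(t)² ≤ c₂·|b(t)|·exp{2α∫₀ᵗ b(w) dw} for all t ∈ [t₁,T). Then for all t ∈ [t₁,T), I_α(t) − I_α(t₁) ≥ (c₁/(2c₂))·(∫_{t₁}^t |b(u)| du)². -/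
open MeasureTheory Filter Set Topology intervalIntegral

section Primitive

variable {g : ℝ → ℝ} {a b : ℝ}

theorem ContinuousOn.continuousOn_primitive (hab : a ≤ b) (hg : ContinuousOn g (Icc a b)) :
    ContinuousOn (fun x => ∫ u in a..x, g u) (Icc a b) := by
  have hg' : IntegrableOn g (uIcc a b) := by
    rw [uIcc_of_le hab]; exact hg.integrableOn_Icc
  simpa only [uIcc_of_le hab] using continuousOn_primitive_interval hg'

theorem ContinuousOn.continuousOn_mul_primitive (hab : a ≤ b) (hg : ContinuousOn g (Icc a b)) :
    ContinuousOn (fun s => g s * ∫ u in a..s, g u) (Icc a b) :=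
  hg.mul (hg.continuousOn_primitive hab)

theorem integral_mul_primitive_eq_sq (hab : a ≤ b) (hg : ContinuousOn g (Icc a b)) :
    ∫ s in a..b, g s * ∫ u in a..s, g u = (∫ u in a..b, g u) ^ 2 / 2 := by
  have hderiv : ∀ s ∈ Ioo a b,
      HasDerivAt (fun x => (∫ u in a..x, g u) ^ 2 / 2) (g s * ∫ u in a..s, g u) s := by
    intro s hs
    have hP : HasDerivAt (fun x => ∫ u in a..x, g u) (g s) s :=
      integral_hasDerivAt_right
        ((hg.mono (Icc_subset_Icc_right hs.2.le)).intervalIntegrable_of_Icc hs.1.le)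
        ((hg.mono Ioo_subset_Icc_self).stronglyMeasurableAtFilter isOpen_Ioo s hs)
        (hg.continuousAt (Icc_mem_nhds hs.1 hs.2))
    refine ((hP.fun_pow 2).div_const 2).congr_deriv ?_
    push_cast
    ring
  rw [integral_eq_sub_of_hasDerivAt_of_le hab ((hg.continuousOn_primitive hab).pow 2 |>.div_const 2)
    hderiv ((hg.continuousOn_mul_primitive hab).intervalIntegrable_of_Icc hab)]
  simp

end Primitive

section ExpWeight

variable {f b : ℝ → ℝ} {a s t : ℝ}

theorem integral_mul_exp_integral_eq (c : ℝ) (hb : IntervalIntegrable b volume a s) :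
    ∫ u in a..s, f u * Real.exp (c * ∫ v in u..s, b v) =
      Real.exp (c * ∫ v in a..s, b v) * ∫ u in a..s, f u / Real.exp (c * ∫ v in a..u, b v) := by
  rw [← intervalIntegral.integral_const_mul]
  refine integral_congr fun u hu => ?_
  rw [← integral_interval_sub_left hb (hb.mono_set (uIcc_subset_uIcc_left hu)), mul_sub,
    Real.exp_sub]
  ring

theorem ContinuousOn.continuousOn_div_exp_primitive (c : ℝ) (hat : a ≤ t)
    (hf : ContinuousOn f (Icc a t)) (hb : ContinuousOn b (Icc a t)) :
    ContinuousOn (fun u => f u / Real.exp (c * ∫ v in a..u, b v)) (Icc a t) :=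
  hf.div ((continuousOn_const.mul (hb.continuousOn_primitive hat)).rexp)
    fun _ _ => (Real.exp_pos _).ne'

theorem ContinuousOn.continuousOn_integral_mul_exp_integral (c : ℝ) (hat : a ≤ t)
    (hf : ContinuousOn f (Icc a t)) (hb : ContinuousOn b (Icc a t)) :
    ContinuousOn (fun s => ∫ u in a..s, f u * Real.exp (c * ∫ v in u..s, b v)) (Icc a t) := by
  refine ContinuousOn.congr (f := fun s => Real.exp (c * ∫ v in a..s, b v) *
      ∫ u in a..s, f u / Real.exp (c * ∫ v in a..u, b v)) ?_ fun s hs => ?_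
  · exact (continuousOn_const.mul (hb.continuousOn_primitive hat)).rexp.mul
      ((hf.continuousOn_div_exp_primitive c hat hb).continuousOn_primitive hat)
  · exact integral_mul_exp_integral_eq c
      ((hb.mono (Icc_subset_Icc_right hs.2)).intervalIntegrable_of_Icc hs.1)

end ExpWeight

section Fisher

variable {b σ : ℝ → ℝ} {α : ℝ}

noncomputable def fisherIntegrand (b σ : ℝ → ℝ) (α s : ℝ) : ℝ :=
  b s ^ 2 / σ s ^ 2 * ∫ u in (0:ℝ)..s, σ u ^ 2 * Real.exp (2 * α * ∫ v in u..s, b v)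

theorem continuousOn_fisherIntegrand {t : ℝ} (ht : 0 ≤ t) (hb : ContinuousOn b (Icc 0 t))
    (hσ : ContinuousOn σ (Icc 0 t)) (hσ0 : ∀ s ∈ Icc (0:ℝ) t, σ s ≠ 0) :
    ContinuousOn (fisherIntegrand b σ α) (Icc 0 t) :=
  ((hb.pow 2).div (hσ.pow 2) fun s hs => pow_ne_zero 2 (hσ0 s hs)).mul
    ((hσ.pow 2).continuousOn_integral_mul_exp_integral (2 * α) ht hb)

theorem fisherInfo_sub_fisherInfo {t₁ t : ℝ} (ht₁ : 0 ≤ t₁) (ht₁t : t₁ ≤ t)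
    (hF : ContinuousOn (fisherIntegrand b σ α) (Icc 0 t)) :
    fisherInfo b σ α t - fisherInfo b σ α t₁ = ∫ s in t₁..t, fisherIntegrand b σ α s :=
  integral_interval_sub_left (hF.intervalIntegrable_of_Icc (ht₁.trans ht₁t))
    ((hF.mono (Icc_subset_Icc_right ht₁t)).intervalIntegrable_of_Icc ht₁)

theorem mul_integral_abs_le_fisherIntegrand {c₁ c₂ t₁ s : ℝ}
    (hb : ContinuousOn b (Icc 0 s)) (hσ : ContinuousOn σ (Icc 0 s)) (hσs : 0 < σ s)
    (hc₁ : 0 ≤ c₁) (hc₂ : 0 < c₂) (ht₁ : 0 ≤ t₁) (ht₁s : t₁ ≤ s)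
    (hlow : ∀ u ∈ Icc t₁ s, c₁ * |b u| * Real.exp (2 * α * ∫ w in (0:ℝ)..u, b w) ≤ σ u ^ 2)
    (hupp : σ s ^ 2 ≤ c₂ * |b s| * Real.exp (2 * α * ∫ w in (0:ℝ)..s, b w)) :
    c₁ / c₂ * (|b s| * ∫ u in t₁..s, |b u|) ≤ fisherIntegrand b σ α s := by
  have hs : 0 ≤ s := ht₁.trans ht₁s
  set W : ℝ → ℝ := fun u => Real.exp (2 * α * ∫ w in (0:ℝ)..u, b w)
  have hWpos : ∀ u, 0 < W u := fun u => Real.exp_pos _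
  have hG : ContinuousOn (fun u => σ u ^ 2 / W u) (Icc 0 s) :=
    (hσ.pow 2).continuousOn_div_exp_primitive (2 * α) hs hb
  have hbB : ContinuousOn (fun u => |b u|) (Icc t₁ s) := (hb.mono (Icc_subset_Icc_left ht₁)).abs
  have hK : c₁ * ∫ u in t₁..s, |b u| ≤ ∫ u in (0:ℝ)..s, σ u ^ 2 / W u :=
    calc c₁ * ∫ u in t₁..s, |b u|
        = ∫ u in t₁..s, c₁ * |b u| := (intervalIntegral.integral_const_mul _ _).symm
      _ ≤ ∫ u in t₁..s, σ u ^ 2 / W u :=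
        integral_mono_on ht₁s ((hbB.intervalIntegrable_of_Icc ht₁s).const_mul c₁)
          ((hG.mono (Icc_subset_Icc_left ht₁)).intervalIntegrable_of_Icc ht₁s)
          fun u hu => (le_div_iff₀ (hWpos u)).2 (hlow u hu)
      _ ≤ ∫ u in (0:ℝ)..s, σ u ^ 2 / W u :=
        integral_mono_interval ht₁ ht₁s le_rfl (ae_of_all _ fun u => by positivity)
          (hG.intervalIntegrable_of_Icc hs)
  have hB : 0 ≤ ∫ u in t₁..s, |b u| := integral_nonneg ht₁s fun u _ => abs_nonneg _
  have hcoef : |b s| / (c₂ * W s) ≤ b s ^ 2 / σ s ^ 2 := by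
    rw [div_le_div_iff₀ (mul_pos hc₂ (hWpos s)) (pow_pos hσs 2), ← sq_abs (b s)]
    nlinarith [mul_le_mul_of_nonneg_left hupp (abs_nonneg (b s))]
  rw [fisherIntegrand, integral_mul_exp_integral_eq _ (hb.intervalIntegrable_of_Icc hs)]
  calc c₁ / c₂ * (|b s| * ∫ u in t₁..s, |b u|)
      = |b s| / (c₂ * W s) * (W s * (c₁ * ∫ u in t₁..s, |b u|)) := by
        field_simp [(hWpos s).ne']
    _ ≤ b s ^ 2 / σ s ^ 2 * (W s * ∫ u in (0:ℝ)..s, σ u ^ 2 / W u) := by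
        gcongr

end Fisher

theorem fisher_increment_lower_bound_general (T : EReal)
    (b σ : ℝ → ℝ) (α : ℝ) (c₁ c₂ t₁ : ℝ)
    (hc₁ : 0 < c₁) (hc₂ : 0 < c₂) (ht₁ : 0 < t₁)
    (hb : ContinuousOn b {t : ℝ | 0 ≤ t ∧ (t : EReal) < T})
    (hσ : ContinuousOn σ {t : ℝ | 0 ≤ t ∧ (t : EReal) < T})
    (hσpos : ∀ t : ℝ, 0 ≤ t → (t : EReal) < T → 0 < σ t)
    (hbound : ∀ t : ℝ, t₁ ≤ t → (t : EReal) < T →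
      c₁ * |b t| * Real.exp (2 * α * ∫ w in (0:ℝ)..t, b w) ≤ (σ t) ^ 2 ∧
      (σ t) ^ 2 ≤ c₂ * |b t| * Real.exp (2 * α * ∫ w in (0:ℝ)..t, b w)) :
    ∀ t : ℝ, t₁ ≤ t → (t : EReal) < T →
      (c₁ / (2 * c₂)) * (∫ u in t₁..t, |b u|) ^ 2 ≤
        fisherInfo b σ α t - fisherInfo b σ α t₁ := by
  intro t ht₁t htT
  have ht : 0 ≤ t := ht₁.le.trans ht₁t
  have hlt : ∀ s ≤ t, (s : EReal) < T := fun s hs => (EReal.coe_le_coe_iff.2 hs).trans_lt htT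
  have hdom : ∀ {s}, s ≤ t → Icc 0 s ⊆ {x : ℝ | 0 ≤ x ∧ (x : EReal) < T} :=
    fun hs u hu => ⟨hu.1, hlt u (hu.2.trans hs)⟩
  have hF := continuousOn_fisherIntegrand (α := α) ht (hb.mono (hdom le_rfl))
    (hσ.mono (hdom le_rfl)) fun s hs => (hσpos s hs.1 (hlt s hs.2)).ne'
  have hbB := (hb.mono (hdom le_rfl)).abs.mono (Icc_subset_Icc_left ht₁.le)
  rw [fisherInfo_sub_fisherInfo ht₁.le ht₁t hF]
  calc c₁ / (2 * c₂) * (∫ u in t₁..t, |b u|) ^ 2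
      = ∫ s in t₁..t, c₁ / c₂ * (|b s| * ∫ u in t₁..s, |b u|) := by
        rw [intervalIntegral.integral_const_mul, integral_mul_primitive_eq_sq ht₁t hbB]
        ring
    _ ≤ ∫ s in t₁..t, fisherIntegrand b σ α s :=
        integral_mono_on ht₁t
          (((hbB.continuousOn_mul_primitive ht₁t).intervalIntegrable_of_Icc ht₁t).const_mul _)
          ((hF.mono (Icc_subset_Icc_left ht₁.le)).intervalIntegrable_of_Icc ht₁t)
          fun s hs => mul_integral_abs_le_fisherIntegrand (hb.mono (hdom hs.2))
            (hσ.mono (hdom hs.2)) (hσpos s (ht₁.le.trans hs.1) (hlt s hs.2)) hc₁.le hc₂ ht₁.le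
            hs.1 (fun u hu => (hbound u hu.1 (hlt u (hu.2.trans hs.2))).1)
            (hbound s hs.1 (hlt s hs.2)).2

/-- Lower bound on the increment of the Fisher information under the two-sided bound
`c₁·|b(t)|·exp{2α∫₀ᵗ b} ≤ σ(t)² ≤ c₂·|b(t)|·exp{2α∫₀ᵗ b}` on `[t₁, T)`. -/
theorem fisher_increment_lower_bound (T : EReal) (hT : 0 < T)
    (b σ : ℝ → ℝ) (α : ℝ) (c₁ c₂ t₁ : ℝ)
    (hc₁ : 0 < c₁) (hc₂ : 0 < c₂) (ht₁ : 0 < t₁) (ht₁T : (t₁ : EReal) < T)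
    (hb : ContinuousOn b {t : ℝ | 0 ≤ t ∧ (t : EReal) < T})
    (hσ : ContinuousOn σ {t : ℝ | 0 ≤ t ∧ (t : EReal) < T})
    (hσpos : ∀ t : ℝ, 0 ≤ t → (t : EReal) < T → 0 < σ t)
    (hbound : ∀ t : ℝ, t₁ ≤ t → (t : EReal) < T →
      c₁ * |b t| * Real.exp (2 * α * ∫ w in (0:ℝ)..t, b w) ≤ (σ t) ^ 2 ∧
      (σ t) ^ 2 ≤ c₂ * |b t| * Real.exp (2 * α * ∫ w in (0:ℝ)..t, b w)) :
    ∀ t : ℝ, t₁ ≤ t → (t : EReal) < T →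
      (c₁ / (2 * c₂)) * (∫ u in t₁..t, |b u|) ^ 2 ≤
        fisherInfo b σ α t - fisherInfo b σ α t₁ :=
  fisher_increment_lower_bound_general T b σ α c₁ c₂ t₁ hc₁ hc₂ ht₁ hb hσ hσpos hbound
end

section
/- Let T ∈ (0,∞], let b : [0,T) → ℝ and σ : [0,T) → (0,∞) be continuous, let α ∈ ℝ, and suppose that lim_{t↑T} I_α(t) = ∞ and lim_{t↑T} (b(t)/σ(t)²)·exp{2α∫₀ᵗ b(w) dw} = C for some C ∈ ℝ with C ≠ 0. Then lim_{t↑T} (∫₀ᵗ σ(s)²·exp{−2α∫₀ˢ b(w) dw} ds)² / I_α(t) = 2/C², and consequently lim_{t↑T} (∫₀ᵗ σ(s)²·exp{−2α∫₀ˢ b(w) dw} ds) / √(I_α(t)) = √2/|C|. -/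
/-!
Write `τ⁻¹(t) = ∫₀ᵗ σ² e^{-2α∫₀ b}` and `g = (b/σ²) e^{2α∫₀ b}`. Since
`∫ᵤˢ b = ∫₀ˢ b - ∫₀ᵘ b`, the inner integral of `I_α` factors as `e^{2α∫₀ˢ b} τ⁻¹(s)`,
so `I_α' = g² τ⁻¹ (τ⁻¹)'` while `((τ⁻¹)²)' = 2 τ⁻¹ (τ⁻¹)'`. The ratio of the derivatives
is `2/g² → 2/C²`, and as `I_α → ∞` the `∞/∞` form of L'Hôpital's rule gives the first
limit; the second is its square root.
-/

open MeasureTheory Filter Set Topology intervalIntegral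

open Asymptotics

lemma upFilter_hasBasis {T : EReal} (hT : ⊥ < T) :
    (upFilter T).HasBasis (fun l : EReal => l < T)
      (fun l => {x : ℝ | l < x ∧ (x : EReal) < T}) :=
  (nhdsLT_basis_of_exists_lt ⟨⊥, hT⟩).comap _

lemma eventually_gt_upFilter {T : EReal} (hT : ⊥ < T) {a : ℝ} (ha : (a : EReal) < T) :
    ∀ᶠ x in upFilter T, a < x ∧ (x : EReal) < T := by
  filter_upwards [(upFilter_hasBasis hT).mem_of_mem ha] with x hx
  exact ⟨EReal.coe_lt_coe_iff.1 hx.1, hx.2⟩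

lemma isLittleO_of_abs_sub_le_mul_sub {α : Type*} {l : Filter α} {u v : α → ℝ}
    (hv : Tendsto v l atTop)
    (h : ∀ ε > 0, ∃ t₀, ∀ᶠ t in l, |u t - u t₀| ≤ ε * (v t - v t₀)) :
    u =o[l] v := by
  refine IsLittleO.of_bound fun c hc => ?_
  obtain ⟨t₀, ht₀⟩ := h (c / 2) (half_pos hc)
  filter_upwards [ht₀, hv.eventually_ge_atTop 0,
    (hv.const_mul_atTop (half_pos hc)).eventually_ge_atTop (|u t₀| + c / 2 * |v t₀|)]
    with t hinc hv0 hlarge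
  rw [Real.norm_eq_abs, Real.norm_eq_abs, abs_of_nonneg hv0]
  have := abs_sub_abs_le_abs_sub (u t) (u t₀)
  have := neg_abs_le (v t₀)
  nlinarith

lemma exists_abs_sub_le_mul_sub_of_hasDerivAt {T : EReal} (hT : ⊥ < T)
    {u v u' v' : ℝ → ℝ} {ε : ℝ}
    (hu : ∀ᶠ s in upFilter T, HasDerivAt u (u' s) s)
    (hv : ∀ᶠ s in upFilter T, HasDerivAt v (v' s) s)
    (hbound : ∀ᶠ s in upFilter T, |u' s| ≤ ε * v' s) :
    ∃ t₀, ∀ᶠ t in upFilter T, |u t - u t₀| ≤ ε * (v t - v t₀) := by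
  obtain ⟨l, hlT, hl⟩ := (upFilter_hasBasis hT).eventually_iff.1 (hu.and (hv.and hbound))
  obtain ⟨t₀, hlt₀, ht₀T⟩ := EReal.lt_iff_exists_real_btwn.1 hlT
  refine ⟨t₀, ?_⟩
  filter_upwards [eventually_gt_upFilter hT ht₀T] with t ⟨ht₀t, htT⟩
  have hdiff : ∀ x ∈ Icc t₀ t, HasDerivAt (fun y => u y - u t₀) (u' x) x ∧
      HasDerivAt (fun y => ε * (v y - v t₀)) (ε * v' x) x ∧ |u' x| ≤ ε * v' x := by
    intro x hx
    obtain ⟨hux, hvx, hbx⟩ := hl ⟨hlt₀.trans_le (EReal.coe_le_coe_iff.2 hx.1),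
      (EReal.coe_le_coe_iff.2 hx.2).trans_lt htT⟩
    exact ⟨hux.sub_const _, (hvx.sub_const _).const_mul ε, hbx⟩
  have := image_norm_le_of_norm_deriv_right_le_deriv_boundary'
    (fun x hx => (hdiff x hx).1.continuousAt.continuousWithinAt)
    (fun x hx => (hdiff x (Ico_subset_Icc_self hx)).1.hasDerivWithinAt) (by simp)
    (fun x hx => (hdiff x hx).2.1.continuousAt.continuousWithinAt)
    (fun x hx => (hdiff x (Ico_subset_Icc_self hx)).2.1.hasDerivWithinAt)
    (fun x hx => (hdiff x (Ico_subset_Icc_self hx)).2.2) (right_mem_Icc.2 ht₀t.le)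
  simpa only [Real.norm_eq_abs] using this

theorem lhopital_of_tendsto_atTop_upFilter {T : EReal} (hT : ⊥ < T) {f g f' g' : ℝ → ℝ}
    {L : ℝ}
    (hf : ∀ᶠ s in upFilter T, HasDerivAt f (f' s) s)
    (hg : ∀ᶠ s in upFilter T, HasDerivAt g (g' s) s)
    (hg' : ∀ᶠ s in upFilter T, 0 < g' s)
    (hg_top : Tendsto g (upFilter T) atTop)
    (hlim : Tendsto (fun s => f' s / g' s) (upFilter T) (𝓝 L)) :
    Tendsto (fun t => f t / g t) (upFilter T) (𝓝 L) := by
  have hfg : ∀ᶠ s in upFilter T, HasDerivAt (fun t => f t - L * g t) (f' s - L * g' s) s :=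
    (hf.and hg).mono fun s h => h.1.sub (h.2.const_mul L)
  have hlittle : (fun t => f t - L * g t) =o[upFilter T] g := by
    refine isLittleO_of_abs_sub_le_mul_sub hg_top fun ε hε =>
      exists_abs_sub_le_mul_sub_of_hasDerivAt hT hfg hg ?_
    filter_upwards [hg', Metric.tendsto_nhds.1 hlim ε hε] with s hpos hdist
    have hsplit : f' s - L * g' s = (f' s / g' s - L) * g' s := by field_simp
    rw [hsplit, abs_mul, abs_of_pos hpos]
    exact mul_le_mul_of_nonneg_right hdist.le hpos.le
  rw [← zero_add L]
  refine (hlittle.tendsto_div_nhds_zero.add_const L).congr' ?_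
  filter_upwards [hg_top.eventually_gt_atTop 0] with t ht
  field_simp
  ring

def timeDomain (T : EReal) : Set ℝ := {t : ℝ | 0 ≤ t ∧ (t : EReal) < T}

section timeDomain

variable {T : EReal} {f : ℝ → ℝ}

lemma uIcc_zero_subset_timeDomain {s : ℝ} (hs : s ∈ timeDomain T) :
    uIcc 0 s ⊆ timeDomain T := by
  rw [uIcc_of_le hs.1]
  exact fun x hx => ⟨hx.1, (EReal.coe_le_coe_iff.2 hx.2).trans_lt hs.2⟩

lemma timeDomain_mem_nhds {s : ℝ} (hs0 : 0 < s) (hs : s ∈ timeDomain T) :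
    timeDomain T ∈ 𝓝 s :=
  mem_of_superset (inter_mem (Ioi_mem_nhds hs0)
    (continuous_coe_real_ereal.continuousAt.preimage_mem_nhds (Iio_mem_nhds hs.2)))
    fun _ hx => ⟨le_of_lt hx.1, hx.2⟩

lemma eventually_pos_mem_timeDomain (hT : 0 < T) :
    ∀ᶠ s in upFilter T, 0 < s ∧ s ∈ timeDomain T := by
  filter_upwards [eventually_gt_upFilter (bot_le.trans_lt hT) (a := 0) (by exact_mod_cast hT)]
    with s hs
  exact ⟨hs.1, hs.1.le, hs.2⟩

lemma ContinuousOn.intervalIntegrable_timeDomain (hf : ContinuousOn f (timeDomain T))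
    {s : ℝ} (hs : s ∈ timeDomain T) : IntervalIntegrable f volume 0 s :=
  (hf.mono (uIcc_zero_subset_timeDomain hs)).intervalIntegrable

lemma ContinuousOn.integral_timeDomain (hf : ContinuousOn f (timeDomain T)) :
    ContinuousOn (fun t => ∫ x in (0:ℝ)..t, f x) (timeDomain T) := by
  intro s hs
  obtain ⟨y, hsy, hyT⟩ := EReal.lt_iff_exists_real_btwn.1 hs.2
  have hy : y ∈ timeDomain T := ⟨hs.1.trans (EReal.coe_lt_coe_iff.1 hsy).le, hyT⟩
  have hcont := continuousWithinAt_primitive (a := 0) (b₀ := s) (b₁ := 0) (b₂ := y)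
    (measure_singleton s) (by simpa [hy.1] using hf.intervalIntegrable_timeDomain hy)
  refine hcont.mono_of_mem_nhdsWithin (mem_nhdsWithin.2 ⟨Iio y, isOpen_Iio, ?_, ?_⟩)
  · exact EReal.coe_lt_coe_iff.1 hsy
  · exact fun x hx => ⟨hx.2.1, le_of_lt hx.1⟩

lemma ContinuousOn.hasDerivAt_integral_timeDomain (hf : ContinuousOn f (timeDomain T))
    {s : ℝ} (hs0 : 0 < s) (hs : s ∈ timeDomain T) :
    HasDerivAt (fun t => ∫ x in (0:ℝ)..t, f x) (f s) s := by
  have hnhds := timeDomain_mem_nhds hs0 hs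
  exact integral_hasDerivAt_right (hf.intervalIntegrable_timeDomain hs)
    ((hf.mono interior_subset).stronglyMeasurableAtFilter isOpen_interior s
      (mem_interior_iff_mem_nhds.2 hnhds))
    (hf.continuousAt hnhds)

end timeDomain

noncomputable def tauInv (b σ : ℝ → ℝ) (α t : ℝ) : ℝ :=
  ∫ s in (0:ℝ)..t, σ s ^ 2 * Real.exp (-(2 * α) * ∫ w in (0:ℝ)..s, b w)

lemma two_mul_div_eq_two_div_sq {x y z c : ℝ} (hx : x ≠ 0) (hy : y ≠ 0) (hz : z ≠ 0) :
    2 * z * (y ^ 2 * Real.exp (-c)) / (x ^ 2 / y ^ 2 * (Real.exp c * z)) =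
      2 / (x / y ^ 2 * Real.exp c) ^ 2 := by
  rw [Real.exp_neg]
  field_simp

section diffusion

variable {T : EReal} {b σ : ℝ → ℝ} {α : ℝ}

lemma continuousOn_tauInv_integrand (hb : ContinuousOn b (timeDomain T))
    (hσ : ContinuousOn σ (timeDomain T)) :
    ContinuousOn (fun s => σ s ^ 2 * Real.exp (-(2 * α) * ∫ w in (0:ℝ)..s, b w))
      (timeDomain T) :=
  (hσ.pow 2).mul (continuousOn_const.mul hb.integral_timeDomain).rexp

lemma hasDerivAt_tauInv (hb : ContinuousOn b (timeDomain T))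
    (hσ : ContinuousOn σ (timeDomain T))
    {s : ℝ} (hs0 : 0 < s) (hs : s ∈ timeDomain T) :
    HasDerivAt (tauInv b σ α) (σ s ^ 2 * Real.exp (-(2 * α) * ∫ w in (0:ℝ)..s, b w)) s :=
  (continuousOn_tauInv_integrand hb hσ).hasDerivAt_integral_timeDomain hs0 hs

lemma tauInv_pos (hb : ContinuousOn b (timeDomain T))
    (hσ : ContinuousOn σ (timeDomain T))
    (hσpos : ∀ t ∈ timeDomain T, 0 < σ t) {s : ℝ} (hs0 : 0 < s)
    (hs : s ∈ timeDomain T) : 0 < tauInv b σ α s :=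
  intervalIntegral_pos_of_pos_on
    ((continuousOn_tauInv_integrand hb hσ).intervalIntegrable_timeDomain hs)
    (fun x hx => mul_pos (pow_pos (hσpos x (uIcc_zero_subset_timeDomain hs
      (Icc_subset_uIcc (Ioo_subset_Icc_self hx)))) 2) (Real.exp_pos _))
    hs0

lemma integral_exp_drift_eq (hb : ContinuousOn b (timeDomain T)) {s : ℝ}
    (hs : s ∈ timeDomain T) :
    ∫ u in (0:ℝ)..s, σ u ^ 2 * Real.exp (2 * α * ∫ v in u..s, b v) =
      Real.exp (2 * α * ∫ w in (0:ℝ)..s, b w) * tauInv b σ α s := by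
  rw [tauInv, ← intervalIntegral.integral_const_mul]
  refine integral_congr fun u hu => ?_
  rw [← integral_interval_sub_left (hb.intervalIntegrable_timeDomain hs)
    (hb.intervalIntegrable_timeDomain (uIcc_zero_subset_timeDomain hs hu)), mul_sub,
    sub_eq_add_neg, Real.exp_add, neg_mul_eq_neg_mul]
  ring

lemma fisherInfo_eq_integral_s6 (hb : ContinuousOn b (timeDomain T)) {t : ℝ}
    (ht : t ∈ timeDomain T) :
    fisherInfo b σ α t = ∫ s in (0:ℝ)..t, b s ^ 2 / σ s ^ 2 *
      (Real.exp (2 * α * ∫ w in (0:ℝ)..s, b w) * tauInv b σ α s) :=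
  integral_congr fun s hs => by
    rw [integral_exp_drift_eq hb (uIcc_zero_subset_timeDomain ht hs)]

lemma hasDerivAt_fisherInfo (hb : ContinuousOn b (timeDomain T))
    (hσ : ContinuousOn σ (timeDomain T))
    (hσpos : ∀ t ∈ timeDomain T, 0 < σ t) {s : ℝ} (hs0 : 0 < s)
    (hs : s ∈ timeDomain T) :
    HasDerivAt (fisherInfo b σ α) (b s ^ 2 / σ s ^ 2 *
      (Real.exp (2 * α * ∫ w in (0:ℝ)..s, b w) * tauInv b σ α s)) s := by
  have hcont : ContinuousOn (fun s => b s ^ 2 / σ s ^ 2 *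
      (Real.exp (2 * α * ∫ w in (0:ℝ)..s, b w) * tauInv b σ α s)) (timeDomain T) :=
    ((hb.pow 2).div (hσ.pow 2) fun x hx => pow_ne_zero 2 (hσpos x hx).ne').mul
      ((continuousOn_const.mul hb.integral_timeDomain).rexp.mul
        (continuousOn_tauInv_integrand hb hσ).integral_timeDomain)
  refine (hcont.hasDerivAt_integral_timeDomain hs0 hs).congr_of_eventuallyEq ?_
  filter_upwards [timeDomain_mem_nhds hs0 hs] with t ht using fisherInfo_eq_integral_s6 hb ht

end diffusion

/-- Under `I_α(t) → ∞` and condition (2.6), the ratio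
`(∫₀ᵗ σ² exp{−2α∫₀ b})² / I_α(t)` tends to `2/C²`, and consequently
`(∫₀ᵗ σ² exp{−2α∫₀ b}) / √(I_α(t))` tends to `√2 / |C|`. -/
theorem tau_inv_limit (T : EReal) (hT : 0 < T)
    (b σ : ℝ → ℝ) (α : ℝ) (C : ℝ) (hC : C ≠ 0)
    (hb : ContinuousOn b {t : ℝ | 0 ≤ t ∧ (t : EReal) < T})
    (hσ : ContinuousOn σ {t : ℝ | 0 ≤ t ∧ (t : EReal) < T})
    (hσpos : ∀ t : ℝ, 0 ≤ t → (t : EReal) < T → 0 < σ t)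
    (hI : Tendsto (fisherInfo b σ α) (upFilter T) atTop)
    (hlim : Tendsto
      (fun t : ℝ => b t / (σ t) ^ 2 * Real.exp (2 * α * ∫ w in (0:ℝ)..t, b w))
      (upFilter T) (𝓝 C)) :
    Tendsto
      (fun t : ℝ =>
        (∫ s in (0:ℝ)..t,
            (σ s) ^ 2 * Real.exp (-(2 * α) * ∫ w in (0:ℝ)..s, b w)) ^ 2 /
          fisherInfo b σ α t)
      (upFilter T) (𝓝 (2 / C ^ 2)) ∧
    Tendsto
      (fun t : ℝ =>
        (∫ s in (0:ℝ)..t,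
            (σ s) ^ 2 * Real.exp (-(2 * α) * ∫ w in (0:ℝ)..s, b w)) /
          Real.sqrt (fisherInfo b σ α t))
      (upFilter T) (𝓝 (Real.sqrt 2 / |C|)) := by
  have hσpos' : ∀ t ∈ timeDomain T, 0 < σ t := fun t ht => hσpos t ht.1 ht.2
  have hdom := eventually_pos_mem_timeDomain hT
  have hτ : ∀ᶠ s in upFilter T, 0 < tauInv b σ α s :=
    hdom.mono fun s hs => tauInv_pos hb hσ hσpos' hs.1 hs.2
  have hb0 : ∀ᶠ s in upFilter T, b s ≠ 0 :=
    (hlim.eventually_ne hC).mono fun s hg hbs => hg (by simp [hbs])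
  have hsq : Tendsto (fun t => tauInv b σ α t ^ 2 / fisherInfo b σ α t) (upFilter T)
      (𝓝 (2 / C ^ 2)) := by
    refine lhopital_of_tendsto_atTop_upFilter (bot_le.trans_lt hT)
      (f' := fun s => 2 * tauInv b σ α s *
        (σ s ^ 2 * Real.exp (-(2 * α) * ∫ w in (0:ℝ)..s, b w)))
      (g' := fun s => b s ^ 2 / σ s ^ 2 *
        (Real.exp (2 * α * ∫ w in (0:ℝ)..s, b w) * tauInv b σ α s)) ?_ ?_ ?_ hI ?_
    · filter_upwards [hdom] with s ⟨hs0, hs⟩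
      simpa using (hasDerivAt_tauInv hb hσ hs0 hs).fun_pow 2
    · filter_upwards [hdom] with s ⟨hs0, hs⟩
      exact hasDerivAt_fisherInfo hb hσ hσpos' hs0 hs
    · filter_upwards [hdom, hτ, hb0] with s ⟨_, hs⟩ hτs hbs
      have := hσpos' s hs
      positivity
    · refine (tendsto_const_nhds.div (hlim.pow 2) (pow_ne_zero 2 hC)).congr' ?_
      filter_upwards [hdom, hτ, hb0] with s ⟨_, hs⟩ hτs hbs
      rw [Pi.div_apply, neg_mul]
      exact (two_mul_div_eq_two_div_sq hbs (hσpos' s hs).ne' hτs.ne').symm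
  refine ⟨hsq, ?_⟩
  have hsqrt := hsq.sqrt
  rw [Real.sqrt_div zero_le_two, Real.sqrt_sq_eq_abs] at hsqrt
  refine hsqrt.congr' ?_
  filter_upwards [hτ] with t ht
  rw [Real.sqrt_div (sq_nonneg _), Real.sqrt_sq ht.le]
  rfl
end

section
/- Let T ∈ (0,∞], let b : [0,T) → ℝ and σ : [0,T) → (0,∞) be continuous, and let α ∈ ℝ. If lim_{t↑T} ∫₀ᵗ σ(s)²·exp{−2α∫₀ˢ b(v) dv} ds < ∞ (i.e., the increasing limit is finite) and lim_{t↑T} ∫₀ᵗ |b(s)| ds = ∞, then lim_{t↑T} I_α(t) = ∞. -/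
open MeasureTheory Filter Set Topology intervalIntegral

/-!
With `A(s) = ∫₀ˢ b` and `V(t) = ∫₀ᵗ σ² e^{−2αA}`, the inner integral of `I_α(s)` is
`e^{2αA(s)} V(s)`, so `I_α(t) = ∫₀ᵗ (b²/σ²) e^{2αA} V`. By AM-GM,
`2|b| ≤ (b²/σ²) e^{2αA} + σ² e^{−2αA} = (b²/σ²) e^{2αA} + V'`.
Fixing `0 < ε < T` and using that `V` is nondecreasing,
`I_α(t) ≥ V(ε) ∫_ε^t (b²/σ²) e^{2αA} ≥ V(ε) (2 ∫_ε^t |b| − (V(t) − V(ε)))`,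
where `V(ε) > 0`, `V(t)` stays bounded and `∫_ε^t |b| → ∞`.
-/

theorem two_mul_abs_le_sq_div_sq_mul_exp_add_sq_mul_exp_neg (x y c : ℝ) (hy : y ≠ 0) :
    2 * |x| ≤ x ^ 2 / y ^ 2 * Real.exp c + y ^ 2 * Real.exp (-c) := by
  have key := two_mul_le_add_sq (|x| / |y| * Real.exp (c / 2)) (|y| * Real.exp (-(c / 2)))
  have hprod : |x| / |y| * Real.exp (c / 2) * (|y| * Real.exp (-(c / 2))) = |x| := by
    rw [Real.exp_neg]
    field_simp
  have hexp : Real.exp (c / 2) ^ 2 = Real.exp c := by rw [← Real.exp_nat_mul]; ring_nf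
  have hexp' : Real.exp (-(c / 2)) ^ 2 = Real.exp (-c) := by rw [← Real.exp_nat_mul]; ring_nf
  rw [mul_assoc, hprod, mul_pow, mul_pow, div_pow, sq_abs, sq_abs, hexp, hexp'] at key
  exact key

theorem mul_integral_le_integral_mul_of_monotoneOn {g F : ℝ → ℝ} {a c d : ℝ}
    (hac : a ≤ c) (hcd : c ≤ d) (hg : ContinuousOn g (Icc a d)) (hF : ContinuousOn F (Icc a d))
    (hg0 : ∀ s ∈ Icc a d, 0 ≤ g s) (hF0 : ∀ s ∈ Icc a d, 0 ≤ F s)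
    (hFmono : MonotoneOn F (Icc a d)) :
    F c * ∫ s in c..d, g s ≤ ∫ s in a..d, g s * F s := by
  have hgF : ContinuousOn (fun s => g s * F s) (Icc a d) := hg.mul hF
  have hac_sub : Icc a c ⊆ Icc a d := Icc_subset_Icc le_rfl hcd
  have hcd_sub : Icc c d ⊆ Icc a d := Icc_subset_Icc hac le_rfl
  have hleft : 0 ≤ ∫ s in a..c, g s * F s :=
    intervalIntegral.integral_nonneg hac fun s hs =>
      mul_nonneg (hg0 s (hac_sub hs)) (hF0 s (hac_sub hs))
  have hright : F c * ∫ s in c..d, g s ≤ ∫ s in c..d, g s * F s := by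
    rw [← intervalIntegral.integral_const_mul]
    refine intervalIntegral.integral_mono_on hcd
      ((hg.mono hcd_sub).intervalIntegrable_of_Icc hcd |>.const_mul _)
      ((hgF.mono hcd_sub).intervalIntegrable_of_Icc hcd) fun s hs => ?_
    rw [mul_comm]
    exact mul_le_mul_of_nonneg_left
      (hFmono ⟨hac, hcd⟩ (hcd_sub hs) hs.1) (hg0 s (hcd_sub hs))
  rw [← integral_add_adjacent_intervals ((hgF.mono hac_sub).intervalIntegrable_of_Icc hac)
    ((hgF.mono hcd_sub).intervalIntegrable_of_Icc hcd)]
  linarith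

theorem continuousOn_primitive_of_continuousOn {f : ℝ → ℝ} {a t : ℝ} (hat : a ≤ t)
    (hf : ContinuousOn f (Icc a t)) : ContinuousOn (fun x => ∫ v in a..x, f v) (Icc a t) := by
  have h := continuousOn_primitive_interval (μ := volume) (f := f) (a := a) (b := t)
    (by rw [uIcc_of_le hat]; exact hf.integrableOn_Icc)
  rwa [uIcc_of_le hat] at h

noncomputable def normalizedVariance (b σ : ℝ → ℝ) (α t : ℝ) : ℝ :=
  ∫ s in (0:ℝ)..t, σ s ^ 2 * Real.exp (-(2 * α) * ∫ v in (0:ℝ)..s, b v)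

section NormalizedVariance

variable {b σ : ℝ → ℝ} {α t : ℝ}

theorem normalizedVariance_nonneg (ht : 0 ≤ t) : 0 ≤ normalizedVariance b σ α t :=
  intervalIntegral.integral_nonneg ht fun _ _ => by positivity

theorem continuousOn_normalizedVariance_integrand (ht : 0 ≤ t) (hb : ContinuousOn b (Icc 0 t))
    (hσ : ContinuousOn σ (Icc 0 t)) :
    ContinuousOn (fun s => σ s ^ 2 * Real.exp (-(2 * α) * ∫ v in (0:ℝ)..s, b v)) (Icc 0 t) :=
  (hσ.pow 2).mul <| Real.continuous_exp.comp_continuousOn <|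
    continuousOn_const.mul (continuousOn_primitive_of_continuousOn ht hb)

theorem monotoneOn_normalizedVariance (ht : 0 ≤ t) (hb : ContinuousOn b (Icc 0 t))
    (hσ : ContinuousOn σ (Icc 0 t)) : MonotoneOn (normalizedVariance b σ α) (Icc 0 t) := by
  intro x hx y hy hxy
  have hint := continuousOn_normalizedVariance_integrand (α := α) ht hb hσ
  exact intervalIntegral.integral_mono_interval le_rfl hx.1 hxy
    (ae_of_all _ fun _ => by positivity)
    ((hint.mono (Icc_subset_Icc le_rfl hy.2)).intervalIntegrable_of_Icc (hx.1.trans hxy))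

theorem normalizedVariance_pos (ht : 0 < t) (hb : ContinuousOn b (Icc 0 t))
    (hσ : ContinuousOn σ (Icc 0 t)) (hσ0 : ∀ s ∈ Icc 0 t, σ s ≠ 0) :
    0 < normalizedVariance b σ α t :=
  intervalIntegral_pos_of_pos_on
    ((continuousOn_normalizedVariance_integrand ht.le hb hσ).intervalIntegrable_of_Icc ht.le)
    (fun s hs => mul_pos (pow_two_pos_of_ne_zero (hσ0 s (Ioo_subset_Icc_self hs)))
      (Real.exp_pos _)) ht

theorem continuousOn_normalizedVariance (ht : 0 ≤ t) (hb : ContinuousOn b (Icc 0 t))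
    (hσ : ContinuousOn σ (Icc 0 t)) : ContinuousOn (normalizedVariance b σ α) (Icc 0 t) :=
  continuousOn_primitive_of_continuousOn ht (continuousOn_normalizedVariance_integrand ht hb hσ)

theorem integral_sq_mul_exp_integral_eq_exp_mul_normalizedVariance {s : ℝ}
    (hb : IntervalIntegrable b volume 0 s) :
    ∫ u in (0:ℝ)..s, σ u ^ 2 * Real.exp (2 * α * ∫ v in u..s, b v)
      = Real.exp (2 * α * ∫ v in (0:ℝ)..s, b v) * normalizedVariance b σ α s := by
  rw [normalizedVariance, ← intervalIntegral.integral_const_mul]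
  refine intervalIntegral.integral_congr fun u hu => ?_
  have hsplit : ∫ v in u..s, b v = (∫ v in (0:ℝ)..s, b v) - ∫ v in (0:ℝ)..u, b v :=
    (integral_interval_sub_left hb (hb.mono_set (uIcc_subset_uIcc_left hu))).symm
  rw [hsplit, mul_left_comm, ← Real.exp_add]
  ring_nf

theorem fisherInfo_eq_integral_mul_normalizedVariance (hb : IntervalIntegrable b volume 0 t) :
    fisherInfo b σ α t = ∫ s in (0:ℝ)..t, b s ^ 2 / σ s ^ 2 *
      Real.exp (2 * α * ∫ v in (0:ℝ)..s, b v) * normalizedVariance b σ α s :=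
  intervalIntegral.integral_congr fun s hs => by
    rw [integral_sq_mul_exp_integral_eq_exp_mul_normalizedVariance
      (hb.mono_set (uIcc_subset_uIcc_left hs))]
    ring

theorem normalizedVariance_mul_le_fisherInfo {ε : ℝ} (hε : 0 ≤ ε) (hεt : ε ≤ t)
    (hb : ContinuousOn b (Icc 0 t)) (hσ : ContinuousOn σ (Icc 0 t))
    (hσ0 : ∀ s ∈ Icc 0 t, σ s ≠ 0) :
    normalizedVariance b σ α ε * ((2 * ∫ s in ε..t, |b s|) -
        (normalizedVariance b σ α t - normalizedVariance b σ α ε)) ≤ fisherInfo b σ α t := by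
  have ht := hε.trans hεt
  set V := normalizedVariance b σ α
  set g := fun s => b s ^ 2 / σ s ^ 2 * Real.exp (2 * α * ∫ v in (0:ℝ)..s, b v)
  set w := fun s => σ s ^ 2 * Real.exp (-(2 * α) * ∫ v in (0:ℝ)..s, b v)
  have hsub : Icc ε t ⊆ Icc 0 t := Icc_subset_Icc hε le_rfl
  have hg : ContinuousOn g (Icc 0 t) :=
    ((hb.pow 2).div (hσ.pow 2) fun s hs => pow_ne_zero 2 (hσ0 s hs)).mul <|
      Real.continuous_exp.comp_continuousOn <|
        continuousOn_const.mul (continuousOn_primitive_of_continuousOn ht hb)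
  have hw : ContinuousOn w (Icc 0 t) := continuousOn_normalizedVariance_integrand ht hb hσ
  have hV_sub : V t - V ε = ∫ s in ε..t, w s :=
    integral_interval_sub_left (hw.intervalIntegrable_of_Icc ht)
      ((hw.mono (Icc_subset_Icc le_rfl hεt)).intervalIntegrable_of_Icc hε)
  have hamgm : 2 * ∫ s in ε..t, |b s| ≤ (∫ s in ε..t, g s) + (V t - V ε) := by
    rw [hV_sub, ← intervalIntegral.integral_const_mul,
      ← intervalIntegral.integral_add ((hg.mono hsub).intervalIntegrable_of_Icc hεt)
        ((hw.mono hsub).intervalIntegrable_of_Icc hεt)]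
    refine intervalIntegral.integral_mono_on hεt
      ((hb.abs.mono hsub).intervalIntegrable_of_Icc hεt |>.const_mul 2)
      (((hg.add hw).mono hsub).intervalIntegrable_of_Icc hεt) fun s hs => ?_
    simpa only [g, w, neg_mul] using two_mul_abs_le_sq_div_sq_mul_exp_add_sq_mul_exp_neg
      (b s) (σ s) (2 * α * ∫ v in (0:ℝ)..s, b v) (hσ0 s (hsub hs))
  have hmono : V ε * ∫ s in ε..t, g s ≤ fisherInfo b σ α t := by
    rw [fisherInfo_eq_integral_mul_normalizedVariance (hb.intervalIntegrable_of_Icc ht)]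
    exact mul_integral_le_integral_mul_of_monotoneOn hε hεt hg
      (continuousOn_normalizedVariance ht hb hσ) (fun s _ => by positivity)
      (fun s hs => normalizedVariance_nonneg hs.1) (monotoneOn_normalizedVariance ht hb hσ)
  calc V ε * ((2 * ∫ s in ε..t, |b s|) - (V t - V ε)) ≤ V ε * ∫ s in ε..t, g s :=
        mul_le_mul_of_nonneg_left (by linarith) (normalizedVariance_nonneg hε)
    _ ≤ fisherInfo b σ α t := hmono

end NormalizedVariance

theorem eventually_coe_lt_upFilter (T : EReal) : ∀ᶠ t : ℝ in upFilter T, (t : EReal) < T :=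
  preimage_mem_comap self_mem_nhdsWithin

theorem eventually_gt_upFilter_s8 {T : EReal} {ε : ℝ} (h : (ε : EReal) < T) :
    ∀ᶠ t in upFilter T, ε < t := by
  have h' : ∀ᶠ t : ℝ in upFilter T, (ε : EReal) < t :=
    preimage_mem_comap (mem_nhdsWithin_of_mem_nhds (isOpen_Ioi.mem_nhds h))
  exact h'.mono fun _ => EReal.coe_lt_coe_iff.mp

theorem Icc_zero_subset_of_coe_lt {T : EReal} {x : ℝ} (hx : (x : EReal) < T) :
    Icc 0 x ⊆ {t : ℝ | 0 ≤ t ∧ (t : EReal) < T} :=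
  fun _ hs => ⟨hs.1, (EReal.coe_le_coe_iff.mpr hs.2).trans_lt hx⟩

/-- If `∫₀ᵗ σ(s)² exp{−2α∫₀ˢ b} ds` has a finite limit as `t ↑ T` while
`∫₀ᵗ |b(s)| ds → ∞`, then `I_α(t) → ∞` as `t ↑ T`. -/
theorem fisher_atTop_of_finite_variance_and_intAbs_atTop (T : EReal) (hT : 0 < T)
    (b σ : ℝ → ℝ) (α : ℝ)
    (hb : ContinuousOn b {t : ℝ | 0 ≤ t ∧ (t : EReal) < T})
    (hσ : ContinuousOn σ {t : ℝ | 0 ≤ t ∧ (t : EReal) < T})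
    (hσpos : ∀ t : ℝ, 0 ≤ t → (t : EReal) < T → 0 < σ t)
    (hfin : ∃ S : ℝ, Tendsto
      (fun t : ℝ =>
        ∫ s in (0:ℝ)..t, (σ s) ^ 2 * Real.exp (-(2 * α) * ∫ v in (0:ℝ)..s, b v))
      (upFilter T) (𝓝 S))
    (hB : Tendsto (fun t : ℝ => ∫ s in (0:ℝ)..t, |b s|) (upFilter T) atTop) :
    Tendsto (fisherInfo b σ α) (upFilter T) atTop := by
  obtain ⟨S, hS⟩ := hfin
  change Tendsto (normalizedVariance b σ α) (upFilter T) (𝓝 S) at hS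
  obtain ⟨ε, hε0, hεT⟩ := EReal.lt_iff_exists_real_btwn.mp hT
  have hε : (0:ℝ) < ε := mod_cast hε0
  have hloc (x : ℝ) (hx : (x : EReal) < T) :
      ContinuousOn b (Icc 0 x) ∧ ContinuousOn σ (Icc 0 x) ∧ ∀ s ∈ Icc 0 x, σ s ≠ 0 :=
    have hsub := Icc_zero_subset_of_coe_lt hx
    ⟨hb.mono hsub, hσ.mono hsub, fun s hs => (hσpos s (hsub hs).1 (hsub hs).2).ne'⟩
  obtain ⟨hbε, hσε, hσε0⟩ := hloc ε hεT
  set V := normalizedVariance b σ α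
  set B := fun t => ∫ s in (0:ℝ)..t, |b s|
  have hVε : 0 < V ε := normalizedVariance_pos hε hbε hσε hσε0
  refine tendsto_atTop_mono' _ ?_ <|
    tendsto_atTop_add_const_right _ (-(V ε * (2 * B ε + S + 1)))
      ((hB.const_mul_atTop two_pos).const_mul_atTop hVε)
  filter_upwards [eventually_gt_upFilter_s8 hεT, eventually_coe_lt_upFilter T,
    hS.eventually_lt_const (lt_add_one S)] with t hεt htT hVt
  obtain ⟨hbt, hσt, hσt0⟩ := hloc t htT
  have hBdiff : ∫ s in ε..t, |b s| = B t - B ε :=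
    (integral_interval_sub_left (hbt.abs.intervalIntegrable_of_Icc (hε.le.trans hεt.le))
      (hbε.abs.intervalIntegrable_of_Icc hε.le)).symm
  have hbound := normalizedVariance_mul_le_fisherInfo (α := α) hε.le hεt.le hbt hσt hσt0
  rw [hBdiff] at hbound
  nlinarith [mul_le_mul_of_nonneg_left hVt.le hVε.le]
end
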